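/- arXiv:2001.08919 — 2 statements merged into one kernel-verified Lean document; each statement's English description precedes it below -/
import Mathlib

section
/- Let ν, δ ∈ (0,1) with ν + δ ≤ 1/6, let p be a real number with 1 − δ ≤ p ≤ 1, let ξ : {1, 2, 3, …} → {0, 1}, and let k₀ be a positive integer such that |(1/m)·∑_{j=1}^m ξ_j − p| ≤ ν for every integer m ≥ k₀. Then for every integer k ≥ k₀ there exists an integer n with k ≤ n ≤ (1 + 3(ν + δ))·k and ξ_n = 1. -/
open MeasureTheory Filter Set
open scoped ENNReal Pointwise Topology NNReal

noncomputable section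

/-- The Euclidean plane. -/
abbrev Plane : Type := EuclideanSpace ℝ (Fin 2)

/-- The point of the plane with given coordinates. -/
def pt (a b : ℝ) : Plane := WithLp.toLp 2 ![a, b]

/-- The Voronoi cell of the point `i` for the set of nuclei `N`. -/
def cell (N : Set Plane) (i : Plane) : Set Plane := {x | ∀ j ∈ N, dist x i ≤ dist x j}

/-- `i` and `j` are Delaunay neighbours: distinct points of `N` whose Voronoi cells share a
common edge (an infinite intersection). -/
def Nbr (N : Set Plane) (i j : Plane) : Prop :=
  i ∈ N ∧ j ∈ N ∧ i ≠ j ∧ (cell N i ∩ cell N j).Infinite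

/-- A Voronoi edge: the common edge of the cells of two Delaunay neighbours. -/
def IsEdge (N : Set Plane) (e : Set Plane) : Prop :=
  ∃ i j, Nbr N i j ∧ e = cell N i ∩ cell N j

/-- A Voronoi vertex: a point lying in at least three distinct Voronoi cells. -/
def IsVertex (N : Set Plane) (x : Plane) : Prop :=
  ∃ i j k, i ∈ N ∧ j ∈ N ∧ k ∈ N ∧ i ≠ j ∧ i ≠ k ∧ j ≠ k ∧
    x ∈ cell N i ∧ x ∈ cell N j ∧ x ∈ cell N k

/-- The set of Voronoi edges. -/
def edges (N : Set Plane) : Set (Set Plane) := {e | IsEdge N e}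

/-- The set `N*` of Voronoi vertices. -/
def vertices (N : Set Plane) : Set Plane := {x | IsVertex N x}

/-- `v` is a point of `V` at minimal distance from `x` (a possible value of the projection). -/
def IsNearestIn (V : Set Plane) (x v : Plane) : Prop :=
  v ∈ V ∧ ∀ w ∈ V, dist x v ≤ dist x w

/-- A non-self-intersecting path formed by `K` segments, each belonging to the family of
segments `E`, joining `a` to `b`. -/
structure EdgePath (E : Set (Set Plane)) (a b : Plane) (K : ℕ) where
  pts : Fin (K + 1) → Plane
  first_eq : pts 0 = a
  last_eq : pts (Fin.last K) = b
  edge_mem : ∀ k : Fin K, segment ℝ (pts k.castSucc) (pts k.succ) ∈ E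
  nonself : ∀ k l : Fin K, k < l →
    ∀ z ∈ segment ℝ (pts k.castSucc) (pts k.succ) ∩ segment ℝ (pts l.castSucc) (pts l.succ),
      (k : ℕ) + 1 = (l : ℕ) ∧ z = pts l.castSucc

/-- The trace of a path: the union of its segments. -/
def pathPoints {E : Set (Set Plane)} {a b : Plane} {K : ℕ} (p : EdgePath E a b K) : Set Plane :=
  ⋃ k : Fin K, segment ℝ (p.pts k.castSucc) (p.pts k.succ)

/-- The generalized grid distance: the minimal number of segments of a path of edges from `E`
joining a point of `V` nearest to `x` with a point of `V` nearest to `y`; `⊤` if there is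
no such path. -/
def mdist (E : Set (Set Plane)) (V : Set Plane) (x y : Plane) : ℕ∞ :=
  sInf {n : ℕ∞ | ∃ (K : ℕ) (a b : Plane), n = (K : ℕ∞) ∧
    IsNearestIn V x a ∧ IsNearestIn V y b ∧ Nonempty (EdgePath E a b K)}

/-- The chemical distance `m₀` on the Voronoi graph of `N`. -/
def m0 (N : Set Plane) (x y : Plane) : ℕ∞ := mdist (edges N) (vertices N) x y

/-- A set of points of the plane is locally finite iff its intersection with every bounded set
is finite. -/
def LocFin (N : Set Plane) : Prop := ∀ R : ℝ, (N ∩ Metric.closedBall 0 R).Finite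

/-- `N` is a Poisson random set of intensity `1` on `(Ω, P)`: it is a.s. locally finite, the
number of its points in a bounded Borel set `B` is a measurable Poisson random variable with
parameter `|B|`, and the counts in pairwise disjoint bounded Borel sets are independent. -/
def IsPoisson {Ω : Type*} [MeasurableSpace Ω] (P : Measure Ω) (N : Ω → Set Plane) : Prop :=
  (∀ᵐ ω ∂P, LocFin (N ω)) ∧
  (∀ B : Set Plane, MeasurableSet B → Bornology.IsBounded B →
    Measurable (fun ω => (N ω ∩ B).ncard) ∧
    ∀ n : ℕ, P {ω | (N ω ∩ B).ncard = n} =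
      ENNReal.ofReal (Real.exp (-(volume B).toReal) * (volume B).toReal ^ n / n.factorial)) ∧
  (∀ (m : ℕ) (B : Fin m → Set Plane), (∀ i, MeasurableSet (B i)) →
    (∀ i, Bornology.IsBounded (B i)) → (Pairwise fun i j => Disjoint (B i) (B j)) →
    ProbabilityTheory.iIndepFun (fun i ω => (N ω ∩ B i).ncard) P)

/-- `T` is a jointly measurable, measure-preserving, ergodic action of `ℝ²` on `Ω` under which
the random set `N` is stationary: `N (T x ω) = N ω − x`. -/
def IsErgodicDS {Ω : Type*} [MeasurableSpace Ω] (P : Measure Ω) (N : Ω → Set Plane)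
    (T : Plane → Ω → Ω) : Prop :=
  (∀ x, MeasurePreserving (T x) P P) ∧
  Measurable (fun q : Plane × Ω => T q.1 q.2) ∧
  (∀ ω, T 0 ω = ω) ∧ (∀ x y ω, T x (T y ω) = T (x + y) ω) ∧
  (∀ x ω, N (T x ω) = (fun p => p - x) '' N ω) ∧
  (∀ A : Set Ω, MeasurableSet A → (∀ x, T x ⁻¹' A = A) → P A = 0 ∨ P A = 1)

/-- `u` is a spin function for the scaled point set `ε • N`: it takes values `±1` there. -/
def IsSpin (N : Set Plane) (ε : ℝ) (u : Plane → ℤ) : Prop := ∀ i ∈ ε • N, u i = 1 ∨ u i = -1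

/-- The scaled ferromagnetic energy
`E_ε(u) = ε · #{(i,j) ∈ ε𝒩 × ε𝒩 : i/ε, j/ε Delaunay neighbours, u i = 1, u j = −1}`. -/
def energy (N : Set Plane) (ε : ℝ) (u : Plane → ℤ) : ℝ≥0∞ :=
  ENNReal.ofReal ε *
    ({p : Plane × Plane | p.1 ∈ ε • N ∧ p.2 ∈ ε • N ∧ Nbr N (ε⁻¹ • p.1) (ε⁻¹ • p.2) ∧
      u p.1 = 1 ∧ u p.2 = -1}.encard : ℝ≥0∞)

/-- The Voronoi set of a spin function: `V_ε(u) = ⋃ {ε C_{i/ε} : i ∈ ε𝒩, u i = 1}`. -/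
def vorSet (N : Set Plane) (ε : ℝ) (u : Plane → ℤ) : Set Plane :=
  ⋃ i ∈ {j : Plane | j ∈ ε • N ∧ u j = 1}, ε • cell N (ε⁻¹ • i)

/-- Convergence of a sequence of spin functions to a set `A`: local `L¹` convergence of the
indicator functions of the associated Voronoi sets to the indicator function of `A`. -/
def SeqConv (N : Set Plane) (ε : ℕ → ℝ) (u : ℕ → Plane → ℤ) (A : Set Plane) : Prop :=
  ∀ R : ℝ, 0 < R →
    Tendsto (fun n => volume (symmDiff (vorSet N (ε n) (u n)) A ∩ Metric.closedBall 0 R))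
      atTop (nhds 0)

/-- Convergence, as `ε → 0⁺`, of a family of spin functions to a set `A`: local `L¹`
convergence of the indicator functions of the associated Voronoi sets to that of `A`. -/
def FamConv (N : Set Plane) (u : ℝ → Plane → ℤ) (A : Set Plane) : Prop :=
  ∀ R : ℝ, 0 < R →
    Tendsto (fun ε => volume (symmDiff (vorSet N ε (u ε)) A ∩ Metric.closedBall 0 R))
      (nhdsWithin 0 (Set.Ioi 0)) (nhds 0)

/-- The set `𝒩⁰_α` of centres of regular Voronoi cells: the cell contains a ball of radius
`α`, has diameter at most `1/α`, and has at most `1/α` Delaunay neighbours. -/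
def regular (N : Set Plane) (α : ℝ) : Set Plane :=
  {i | i ∈ N ∧ (∃ c, Metric.closedBall c α ⊆ cell N i) ∧
    EMetric.diam (cell N i) ≤ ENNReal.ofReal (1 / α) ∧
    ({j | Nbr N i j}.encard : ℝ≥0∞) ≤ ENNReal.ofReal (1 / α)}

/-- `j` can be reached from `i` by a path in `S` whose consecutive points are Delaunay
neighbours for `N`. -/
def Reach (N S : Set Plane) (i j : Plane) : Prop :=
  ∃ (K : ℕ) (c : Fin (K + 1) → Plane), c 0 = i ∧ c (Fin.last K) = j ∧
    (∀ k, c k ∈ S) ∧ ∀ k : Fin K, Nbr N (c k.castSucc) (c k.succ)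

/-- `C` is an infinite connected component of `S` in the Delaunay graph of `N`. -/
def IsInfComponent (N S C : Set Plane) : Prop :=
  (∃ i ∈ S, C = {j | Reach N S i j}) ∧ C.Infinite

/-- The edges of the Voronoi cells with centres in `S` (the set `𝒱_α` when `S = 𝒩_α`). -/
def edgesOf (N S : Set Plane) : Set (Set Plane) :=
  {e | ∃ i ∈ S, ∃ j, Nbr N i j ∧ e = cell N i ∩ cell N j}

/-- The endpoints (extreme points) of the edges in `edgesOf N S` (the set `𝒩*_α`). -/
def verticesOf (N S : Set Plane) : Set Plane :=
  {x | ∃ e ∈ edgesOf N S, x ∈ Set.extremePoints ℝ e}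

/-- The chemical distance `m_α` on the cluster `S` of regular cells. -/
def mAlpha (N S : Set Plane) (x y : Plane) : ℕ∞ :=
  mdist (edgesOf N S) (verticesOf N S) x y

/-- The polyomino `𝐀(P)` of the unit squares of the grid `ℤ²` meeting the set `P`. -/
def gridA (P : Set Plane) : Set (ℤ × ℤ) :=
  {z | ∃ x ∈ P, |x 0 - z.1| ≤ 1 / 2 ∧ |x 1 - z.2| ≤ 1 / 2}

/-- The vector `ν^⊥` obtained rotating `ν` by `π/2`. -/
def perp (ν : Plane) : Plane := pt (-(ν 1)) (ν 0)

/-- The rectangle `R^ν_{T,δ}(x)` centred at `x`, of width `2δT` in the direction `ν` and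
length `T` in the direction `ν^⊥`. -/
def rect (x ν : Plane) (T δ : ℝ) : Set Plane :=
  {y | |(inner ℝ (y - x) ν : ℝ)| ≤ δ * T ∧ |(inner ℝ (y - x) (perp ν) : ℝ)| ≤ T / 2}

/-- The side of `R^ν_{T,δ}(x)` parallel to `ν` at signed distance `s` in direction `ν^⊥`. -/
def rectSide (x ν : Plane) (T δ : ℝ) (s : ℝ) : Set Plane :=
  {y | |(inner ℝ (y - x) ν : ℝ)| ≤ δ * T ∧ (inner ℝ (y - x) (perp ν) : ℝ) = s}

/-! If `ξ` had no `1` in `[k, M]` with `M = ⌊(1 + 3θ) k⌋`, `θ = ν + δ`, then `ξ₁ + ⋯ + ξ_M`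
would be at most `k - 1`, whereas the average bound forces it to be at least
`(p - ν) M ≥ (1 - θ) M > k - 1`. -/

theorem sum_Icc_le_sub_one_of_eq_zero {ξ : ℕ → ℕ} {k M : ℕ} (hk : 1 ≤ k) (hkM : k ≤ M + 1)
    (hle : ∀ j ∈ Finset.Ico 1 k, ξ j ≤ 1) (hzero : ∀ j ∈ Finset.Icc k M, ξ j = 0) :
    ∑ j ∈ Finset.Icc 1 M, ξ j ≤ k - 1 := by
  calc ∑ j ∈ Finset.Icc 1 M, ξ j
      = ∑ j ∈ Finset.Ico 1 k, ξ j + ∑ j ∈ Finset.Icc k M, ξ j := by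
        rw [← Finset.Ico_add_one_right_eq_Icc, ← Finset.Ico_add_one_right_eq_Icc,
          Finset.sum_Ico_consecutive _ hk hkM]
    _ ≤ (Finset.Ico 1 k).card • 1 := by
        rw [Finset.sum_eq_zero hzero, add_zero]
        exact Finset.sum_le_card_nsmul _ _ _ hle
    _ = k - 1 := by rw [Nat.card_Ico, smul_eq_mul, mul_one]

theorem sub_mul_le_of_abs_div_sub_le {S p ν m : ℝ} (hm : 0 < m) (h : |1 / m * S - p| ≤ ν) :
    (p - ν) * m ≤ S := by
  have hlow : p - ν ≤ S / m := by linarith [(abs_le.1 h).1, one_div_mul_eq_div m S]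
  exact (le_div_iff₀ hm).1 hlow

/-- The window length comes from `(1 - θ) (1 + 3θ) = 1 + θ (2 - 3θ) ≥ 1` for `0 ≤ θ ≤ 2/3`. -/
theorem sub_one_lt_one_sub_mul {θ k M : ℝ} (hθ0 : 0 ≤ θ) (hθ : θ ≤ 2 / 3) (hk : 0 ≤ k)
    (hM : (1 + 3 * θ) * k < M + 1) : k - 1 < (1 - θ) * M := by
  nlinarith [mul_nonneg (mul_nonneg hθ0 (by linarith : (0 : ℝ) ≤ 2 - 3 * θ)) hk]

theorem statement_13_general (ν δ : ℝ) (hν0 : 0 < ν) (hδ0 : 0 < δ)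
    (hsum : ν + δ ≤ 1 / 6) (p : ℝ) (hp1 : 1 - δ ≤ p)
    (ξ : ℕ → ℕ) (hξ : ∀ j : ℕ, 1 ≤ j → ξ j = 0 ∨ ξ j = 1)
    (k₀ : ℕ) (hk₀ : 0 < k₀)
    (havg : ∀ m : ℕ, k₀ ≤ m →
      |(1 / (m : ℝ)) * ∑ j ∈ Finset.Icc 1 m, (ξ j : ℝ) - p| ≤ ν) :
    ∀ k : ℕ, k₀ ≤ k → ∃ n : ℕ, k ≤ n ∧ (n : ℝ) ≤ (1 + 3 * (ν + δ)) * (k : ℝ) ∧ ξ n = 1 := by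
  intro k hk
  by_contra! hnone
  have hk1 : 1 ≤ k := hk₀.trans_le hk
  have hwindow : (0 : ℝ) ≤ (1 + 3 * (ν + δ)) * k := by positivity
  set M := ⌊(1 + 3 * (ν + δ)) * (k : ℝ)⌋₊
  have hkM : k ≤ M := Nat.le_floor (le_mul_of_one_le_left k.cast_nonneg (by linarith))
  have hzero : ∀ j ∈ Finset.Icc k M, ξ j = 0 := fun j hj => by
    have hjM := Finset.mem_Icc.1 hj
    refine (hξ j (hk1.trans hjM.1)).resolve_right (hnone j hjM.1 ?_)
    exact (Nat.cast_le.2 hjM.2).trans (Nat.floor_le hwindow)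
  have hupper : ∑ j ∈ Finset.Icc 1 M, ξ j ≤ k - 1 :=
    sum_Icc_le_sub_one_of_eq_zero hk1 (by omega)
      (fun j hj => by rcases hξ j (Finset.mem_Ico.1 hj).1 with h | h <;> omega) hzero
  have hupper' : (∑ j ∈ Finset.Icc 1 M, (ξ j : ℝ)) ≤ k - 1 := by
    rw [← Nat.cast_pred hk1]
    exact_mod_cast hupper
  have hMpos : (0 : ℝ) < M := by exact_mod_cast hk1.trans hkM
  have hlower := sub_mul_le_of_abs_div_sub_le hMpos (havg M (hk.trans hkM))
  have hgap := sub_one_lt_one_sub_mul (by positivity) (by linarith) k.cast_nonneg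
    (Nat.lt_floor_add_one ((1 + 3 * (ν + δ)) * (k : ℝ)))
  have hp : (1 - (ν + δ)) * (M : ℝ) ≤ (p - ν) * M :=
    mul_le_mul_of_nonneg_right (by linarith) hMpos.le
  linarith

/-- Deterministic lemma on `{0,1}`-valued sequences: if the averages of `ξ` over the first `m`
terms (`m ≥ k₀`) are within `ν` of `p ∈ [1−δ, 1]` and `ν + δ ≤ 1/6`, then every window
`[k, (1+3(ν+δ))k]` with `k ≥ k₀` contains an index `n` with `ξ n = 1`. -/
theorem statement_13 (ν δ : ℝ) (hν0 : 0 < ν) (hν1 : ν < 1) (hδ0 : 0 < δ) (hδ1 : δ < 1)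
    (hsum : ν + δ ≤ 1 / 6) (p : ℝ) (hp1 : 1 - δ ≤ p) (hp2 : p ≤ 1)
    (ξ : ℕ → ℕ) (hξ : ∀ j : ℕ, 1 ≤ j → ξ j = 0 ∨ ξ j = 1)
    (k₀ : ℕ) (hk₀ : 0 < k₀)
    (havg : ∀ m : ℕ, k₀ ≤ m →
      |(1 / (m : ℝ)) * ∑ j ∈ Finset.Icc 1 m, (ξ j : ℝ) - p| ≤ ν) :
    ∀ k : ℕ, k₀ ≤ k → ∃ n : ℕ, k ≤ n ∧ (n : ℝ) ≤ (1 + 3 * (ν + δ)) * (k : ℝ) ∧ ξ n = 1 :=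
  statement_13_general ν δ hν0 hδ0 hsum p hp1 ξ hξ k₀ hk₀ havg

end
end

section
/- Let N ⊆ ℝ² be locally finite and nonempty, let L > 0, let j', j'' ∈ ℤ² with |j' − j''| = 1, set Q_{5L} = [−5L, 5L]² and U = (Q_{5L} + 10L·j') ∪ (Q_{5L} + 10L·j''). Assume that every grid square L·(z + [0,1]²) with z ∈ ℤ² that intersects U contains a point of N. Then every Voronoi cell C_p (p ∈ N) that intersects the segment joining 10L·j' to 10L·j'' is contained in U. -/
open MeasureTheory Filter Set
open scoped ENNReal Pointwise Topology NNReal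

noncomputable section

/-!
Voronoi cells are convex, being intersections of half-planes. Every point of `U` lies in a grid
square containing a nucleus, hence within `2L` of `N`; so a point of `C_p` lying in `U` is within
`2L` of `p`. Take `x ∈ C_p` on the segment: the ball of radius `5L` about `x` lies in `U`, so the
points of `C_p` in that ball are within `4L` of `x`. By convexity, `C_p` cannot reach distance
`≥ 5L` from `x` without crossing the annulus `4L < |y - x| < 5L`, hence `C_p` stays in the ball.
-/

theorem convex_setOf_dist_le_dist {E : Type*} [NormedAddCommGroup E] [InnerProductSpace ℝ E]
    (p q : E) : Convex ℝ {x : E | dist x p ≤ dist x q} := by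
  have h : {x : E | dist x p ≤ dist x q} = {x | inner ℝ (q - p) x ≤ (‖q‖ ^ 2 - ‖p‖ ^ 2) / 2} := by
    ext x
    simp only [mem_ofPred_eq, dist_eq_norm, ← sq_le_sq₀ (norm_nonneg _) (norm_nonneg _),
      norm_sub_sq_real, inner_sub_left]
    constructor <;> intro h <;> linarith [real_inner_comm x p, real_inner_comm x q]
  rw [h]
  exact convex_halfSpace_le (innerSL ℝ (q - p)).toLinearMap.isLinear _

theorem convex_cell (N : Set Plane) (p : Plane) : Convex ℝ (cell N p) := by
  simpa only [cell, ofPred_forall] using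
    convex_iInter₂ fun q (_ : q ∈ N) => convex_setOf_dist_le_dist p q

theorem Convex.subset_ball_of_dist_gap {E : Type*} [NormedAddCommGroup E] [NormedSpace ℝ E]
    {C : Set E} (hC : Convex ℝ C) {x : E} (hx : x ∈ C) {r R : ℝ} (hr : 0 ≤ r) (hrR : r < R)
    (hgap : ∀ z ∈ C, dist z x < R → dist z x ≤ r) : C ⊆ Metric.ball x R := by
  intro y hy
  by_contra hyR
  rw [Metric.mem_ball, not_lt] at hyR
  have hy0 : 0 < dist x y := by rw [dist_comm]; linarith
  obtain ⟨s, hrs, hsR⟩ := exists_between hrR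
  have hs : 0 ≤ s / dist x y ∧ s / dist x y ≤ 1 :=
    ⟨div_nonneg (by linarith) hy0.le, (div_le_one hy0).2 (by rw [dist_comm]; linarith)⟩
  have hz := hC.lineMap_mem hx hy hs
  have hdz : dist (AffineMap.lineMap x y (s / dist x y)) x = s := by
    rw [dist_lineMap_left, Real.norm_of_nonneg hs.1, div_mul_cancel₀ _ hy0.ne']
  have := hgap _ hz (by rw [hdz]; linarith)
  linarith

theorem cell_subset_ball {N U : Set Plane} {p x : Plane} {r R : ℝ} (hr : 0 ≤ r) (hrR : 2 * r < R)
    (hcover : ∀ y ∈ U, ∃ q ∈ N, dist y q ≤ r) (hx : x ∈ cell N p)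
    (hball : Metric.ball x R ⊆ U) : cell N p ⊆ Metric.ball x R := by
  have hnear : ∀ y ∈ cell N p, y ∈ U → dist y p ≤ r := fun y hy hyU =>
    let ⟨q, hqN, hyq⟩ := hcover y hyU
    (hy q hqN).trans hyq
  have hxp := hnear x hx (hball (Metric.mem_ball_self (by linarith)))
  refine (convex_cell N p).subset_ball_of_dist_gap hx (by positivity) hrR fun z hz hzx => ?_
  calc dist z x ≤ dist z p + dist x p := dist_triangle_right _ _ _
    _ ≤ 2 * r := by linarith [hnear z hz (hball hzx)]

def gridSquare (L : ℝ) (z : ℤ × ℤ) : Set Plane :=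
  {x | L * z.1 ≤ x 0 ∧ x 0 ≤ L * (z.1 + 1) ∧ L * z.2 ≤ x 1 ∧ x 1 ≤ L * (z.2 + 1)}

theorem mem_gridSquare_floor {L : ℝ} (hL : 0 < L) (x : Plane) :
    x ∈ gridSquare L (⌊x 0 / L⌋, ⌊x 1 / L⌋) := by
  have h (t : ℝ) : L * ⌊t / L⌋ ≤ t ∧ t ≤ L * (⌊t / L⌋ + 1) :=
    ⟨by rw [mul_comm, ← le_div_iff₀ hL]; exact Int.floor_le _,
      by rw [mul_comm, ← div_le_iff₀ hL]; exact (Int.lt_floor_add_one _).le⟩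
  exact ⟨(h _).1, (h _).2, (h _).1, (h _).2⟩

theorem dist_le_of_mem_gridSquare {L : ℝ} (hL : 0 ≤ L) {z : ℤ × ℤ} {x y : Plane}
    (hx : x ∈ gridSquare L z) (hy : y ∈ gridSquare L z) : dist x y ≤ 2 * L := by
  obtain ⟨hx₁, hx₂, hx₃, hx₄⟩ := hx
  obtain ⟨hy₁, hy₂, hy₃, hy₄⟩ := hy
  rw [EuclideanSpace.dist_eq, Fin.sum_univ_two, Real.dist_eq, Real.dist_eq, sq_abs, sq_abs]
  exact Real.sqrt_le_iff.2 ⟨by positivity, by nlinarith⟩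

theorem exists_dist_le_of_forall_gridSquare {N U : Set Plane} {L : ℝ} (hL : 0 < L)
    (hfill : ∀ z, (gridSquare L z ∩ U).Nonempty → (N ∩ gridSquare L z).Nonempty) :
    ∀ x ∈ U, ∃ q ∈ N, dist x q ≤ 2 * L := by
  intro x hx
  obtain ⟨q, hqN, hq⟩ := hfill _ ⟨x, mem_gridSquare_floor hL x, hx⟩
  exact ⟨q, hqN, dist_le_of_mem_gridSquare hL.le (mem_gridSquare_floor hL x) hq⟩

theorem abs_sub_le_or_abs_sub_le_of_mem_uIcc {a b x w r : ℝ} (hx : x ∈ uIcc a b)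
    (hab : |a - b| ≤ 2 * r) (hw : |w - x| < r) : |w - a| ≤ r ∨ |w - b| ≤ r := by
  rw [abs_le] at hab
  rw [abs_lt] at hw
  simp only [abs_le]
  rcases mem_uIcc.1 hx with ⟨h1, h2⟩ | ⟨h1, h2⟩ <;> rcases le_total w ((a + b) / 2) with h | h
  · exact Or.inl ⟨by linarith, by linarith⟩
  · exact Or.inr ⟨by linarith, by linarith⟩
  · exact Or.inr ⟨by linarith, by linarith⟩
  · exact Or.inl ⟨by linarith, by linarith⟩

theorem mem_uIcc_apply_of_mem_segment {a b x : Plane} (hx : x ∈ segment ℝ a b) (i : Fin 2) :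
    x i ∈ uIcc (a i) (b i) := by
  rw [← segment_eq_uIcc]
  obtain ⟨u, v, hu, hv, huv, rfl⟩ := hx
  exact ⟨u, v, hu, hv, huv, by simp⟩

def box (c : Plane) (r : ℝ) : Set Plane := {x | |x 0 - c 0| ≤ r ∧ |x 1 - c 1| ≤ r}

theorem ball_subset_box_union_box {a b x : Plane} {r : ℝ} (hx : x ∈ segment ℝ a b)
    (haxis : a 0 = b 0 ∨ a 1 = b 1) (hab : ∀ i, |a i - b i| ≤ 2 * r) :
    Metric.ball x r ⊆ box a r ∪ box b r := by
  intro w hw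
  have hwx : ∀ i, |w i - x i| < r := fun i =>
    (Real.dist_eq _ _ ▸ PiLp.dist_apply_le w x i).trans_lt hw
  have hnear : ∀ i, |w i - a i| ≤ r ∨ |w i - b i| ≤ r := fun i =>
    abs_sub_le_or_abs_sub_le_of_mem_uIcc (mem_uIcc_apply_of_mem_segment hx i) (hab i) (hwx i)
  have hboth : ∀ i, a i = b i → |w i - a i| ≤ r ∧ |w i - b i| ≤ r := by
    intro i hi
    have hxi := mem_uIcc_apply_of_mem_segment hx i
    rw [← hi, uIcc_self, mem_singleton_iff] at hxi
    exact ⟨hxi ▸ (hwx i).le, hi ▸ hxi ▸ (hwx i).le⟩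
  rcases haxis with h | h
  · rcases hnear 1 with h1 | h1
    exacts [Or.inl ⟨(hboth 0 h).1, h1⟩, Or.inr ⟨(hboth 0 h).2, h1⟩]
  · rcases hnear 0 with h0 | h0
    exacts [Or.inl ⟨h0, (hboth 1 h).1⟩, Or.inr ⟨h0, (hboth 1 h).2⟩]

theorem Int.sq_add_sq_eq_one {m n : ℤ} (h : m ^ 2 + n ^ 2 = 1) :
    (m = 0 ∨ n = 0) ∧ |m| ≤ 1 ∧ |n| ≤ 1 := by
  refine ⟨?_, by nlinarith [sq_abs m, abs_nonneg m], by nlinarith [sq_abs n, abs_nonneg n]⟩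
  by_contra! hmn
  nlinarith [sq_abs m, sq_abs n, Int.one_le_abs hmn.1, Int.one_le_abs hmn.2]

def latticePt (s : ℝ) (j : ℤ × ℤ) : Plane := pt (s * j.1) (s * j.2)

theorem latticePt_axis_aligned {s : ℝ} (hs : 0 ≤ s) {j k : ℤ × ℤ}
    (h : (j.1 - k.1) ^ 2 + (j.2 - k.2) ^ 2 = 1) :
    (latticePt s j 0 = latticePt s k 0 ∨ latticePt s j 1 = latticePt s k 1) ∧
      ∀ i, |latticePt s j i - latticePt s k i| ≤ s := by
  obtain ⟨hzero, h₁, h₂⟩ := Int.sq_add_sq_eq_one h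
  have habs {m n : ℤ} (hmn : |m - n| ≤ 1) : |s * m - s * n| ≤ s := by
    rw [← mul_sub, abs_mul, abs_of_nonneg hs]
    exact mul_le_of_le_one_right hs (by exact_mod_cast hmn)
  simp only [latticePt, pt, Fin.forall_fin_two]
  refine ⟨?_, habs h₁, habs h₂⟩
  rcases hzero with h0 | h0 <;> [left; right] <;> simp [sub_eq_zero.1 h0]

theorem statement_15_general (N : Set Plane)
    (L : ℝ) (hL : 0 < L) (j' j'' : ℤ × ℤ)
    (hadj : (j'.1 - j''.1) ^ 2 + (j'.2 - j''.2) ^ 2 = 1)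
    (U : Set Plane)
    (hU : U = {x : Plane | |x 0 - 10 * L * (j'.1 : ℝ)| ≤ 5 * L ∧
                           |x 1 - 10 * L * (j'.2 : ℝ)| ≤ 5 * L} ∪
              {x : Plane | |x 0 - 10 * L * (j''.1 : ℝ)| ≤ 5 * L ∧
                           |x 1 - 10 * L * (j''.2 : ℝ)| ≤ 5 * L})
    (hfill : ∀ z : ℤ × ℤ,
      ({x : Plane | L * (z.1 : ℝ) ≤ x 0 ∧ x 0 ≤ L * ((z.1 : ℝ) + 1) ∧
                    L * (z.2 : ℝ) ≤ x 1 ∧ x 1 ≤ L * ((z.2 : ℝ) + 1)} ∩ U).Nonempty →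
      (N ∩ {x : Plane | L * (z.1 : ℝ) ≤ x 0 ∧ x 0 ≤ L * ((z.1 : ℝ) + 1) ∧
                        L * (z.2 : ℝ) ≤ x 1 ∧ x 1 ≤ L * ((z.2 : ℝ) + 1)}).Nonempty) :
    ∀ p ∈ N,
      (cell N p ∩ segment ℝ (pt (10 * L * (j'.1 : ℝ)) (10 * L * (j'.2 : ℝ)))
          (pt (10 * L * (j''.1 : ℝ)) (10 * L * (j''.2 : ℝ)))).Nonempty →
      cell N p ⊆ U := by
  rintro p - ⟨x, hxp, hx⟩
  obtain ⟨haxis, hab⟩ := latticePt_axis_aligned (by positivity : 0 ≤ 10 * L) hadj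
  have hball : Metric.ball x (5 * L) ⊆ U := by
    have hU' : U = box (latticePt (10 * L) j') (5 * L) ∪ box (latticePt (10 * L) j'') (5 * L) := hU
    rw [hU']
    exact ball_subset_box_union_box hx haxis fun i => (hab i).trans_eq (by ring)
  exact (cell_subset_ball (by positivity) (by linarith)
    (exists_dist_le_of_forall_gridSquare hL hfill) hxp hball).trans hball

/-- Claim (s1) in the proof of the channel property: if every grid square of size `L` meeting
`U = (Q_{5L} + 10Lj') ∪ (Q_{5L} + 10Lj'')` contains a point of the locally finite set `N`,
then every Voronoi cell meeting the segment from `10Lj'` to `10Lj''` is contained in `U`. -/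
theorem statement_15 (N : Set Plane) (hN : LocFin N) (hne : N.Nonempty)
    (L : ℝ) (hL : 0 < L) (j' j'' : ℤ × ℤ)
    (hadj : (j'.1 - j''.1) ^ 2 + (j'.2 - j''.2) ^ 2 = 1)
    (U : Set Plane)
    (hU : U = {x : Plane | |x 0 - 10 * L * (j'.1 : ℝ)| ≤ 5 * L ∧
                           |x 1 - 10 * L * (j'.2 : ℝ)| ≤ 5 * L} ∪
              {x : Plane | |x 0 - 10 * L * (j''.1 : ℝ)| ≤ 5 * L ∧
                           |x 1 - 10 * L * (j''.2 : ℝ)| ≤ 5 * L})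
    (hfill : ∀ z : ℤ × ℤ,
      ({x : Plane | L * (z.1 : ℝ) ≤ x 0 ∧ x 0 ≤ L * ((z.1 : ℝ) + 1) ∧
                    L * (z.2 : ℝ) ≤ x 1 ∧ x 1 ≤ L * ((z.2 : ℝ) + 1)} ∩ U).Nonempty →
      (N ∩ {x : Plane | L * (z.1 : ℝ) ≤ x 0 ∧ x 0 ≤ L * ((z.1 : ℝ) + 1) ∧
                        L * (z.2 : ℝ) ≤ x 1 ∧ x 1 ≤ L * ((z.2 : ℝ) + 1)}).Nonempty) :
    ∀ p ∈ N,
      (cell N p ∩ segment ℝ (pt (10 * L * (j'.1 : ℝ)) (10 * L * (j'.2 : ℝ)))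
          (pt (10 * L * (j''.1 : ℝ)) (10 * L * (j''.2 : ℝ)))).Nonempty →
      cell N p ⊆ U :=
  statement_15_general N L hL j' j'' hadj U hU hfill
end
end
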